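/- Soundness of amortized equivalence for observations: if q₁ ≈ q₂, then for every program p, the total cost ψ(p, q₁) of running p on q₁ equals ψ(p, q₂). -/

import Mathlib

/-- The polynomial functor whose final coalgebra is the coinductive queue
interface: `quit : ℕ`, `enqueue : E → Queue`, `dequeue : ℕ × (Option E × Queue)`.
A node carries `(quit cost, dequeue cost, dequeued element)` and has children
indexed by `Option E`: `some e` is the queue after enqueuing `e`, `none` is the
successor queue after dequeuing. -/
def QueueF (E : Type) : PFunctor := ⟨ℕ × ℕ × Option E, fun _ => Option E⟩

/-- The coinductive queue interface: the final coalgebra of `QueueF`. -/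
def Queue (E : Type) : Type := (QueueF E).M

namespace Queue

variable {E : Type}

/-- The final cost. -/
def quit (q : Queue E) : ℕ := (PFunctor.M.dest q).1.1

/-- The cost of the next dequeue. -/
def deqCost (q : Queue E) : ℕ := (PFunctor.M.dest q).1.2.1

/-- The optional element returned by the next dequeue. -/
def deqElem (q : Queue E) : Option E := (PFunctor.M.dest q).1.2.2

/-- The queue after enqueuing an element. -/
def enqueue (q : Queue E) (e : E) : Queue E := (PFunctor.M.dest q).2 (some e)

/-- The successor queue after dequeuing. -/
def deqNext (q : Queue E) : Queue E := (PFunctor.M.dest q).2 none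

/-- The dequeue method: a cost paired with an optional element and successor queue. -/
def dequeue (q : Queue E) : ℕ × (Option E × Queue E) := (deqCost q, deqElem q, deqNext q)

/-- `step c q` adds cost `c` to the `quit` cost and to the cost of the first
`dequeue`, and propagates `step c` through `enqueue`. -/
def step (c : ℕ) (q : Queue E) : Queue E :=
  PFunctor.M.corec
    (fun s : ℕ × Queue E =>
      ⟨(s.1 + quit s.2, s.1 + deqCost s.2, deqElem s.2),
       fun o =>
         match o with
         | some e => (s.1, enqueue s.2 e)
         | none => (0, deqNext s.2)⟩)
    (c, q)

/-- A relation is a bisimulation if related queues have equal observations and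
related successors. -/
def IsBisim (R : Queue E → Queue E → Prop) : Prop :=
  ∀ q₁ q₂, R q₁ q₂ →
    quit q₁ = quit q₂ ∧
    (∀ e, R (enqueue q₁ e) (enqueue q₂ e)) ∧
    deqCost q₁ = deqCost q₂ ∧
    deqElem q₁ = deqElem q₂ ∧
    R (deqNext q₁) (deqNext q₂)

/-- Bisimilarity: the largest bisimulation. -/
def Bisim (q₁ q₂ : Queue E) : Prop := ∃ R, IsBisim R ∧ R q₁ q₂

/-- A relation is an amortized bisimulation if related queues have equal quit
costs, related enqueues, equal dequeued elements, and successors related after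
pushing the respective dequeue costs onto them via `step`. -/
def IsAmortizedBisim (R : Queue E → Queue E → Prop) : Prop :=
  ∀ q₁ q₂, R q₁ q₂ →
    quit q₁ = quit q₂ ∧
    (∀ e, R (enqueue q₁ e) (enqueue q₂ e)) ∧
    deqElem q₁ = deqElem q₂ ∧
    R (step (deqCost q₁) (deqNext q₁)) (step (deqCost q₂) (deqNext q₂))

/-- Amortized equivalence `≈`: the largest amortized bisimulation. -/
def AmortEquiv (q₁ q₂ : Queue E) : Prop := ∃ R, IsAmortizedBisim R ∧ R q₁ q₂

/-- The single-list specification queue, with a pending cost `c` already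
`step`ped onto it.  `quit (QUEUEaux (c, l)) = c`; enqueue costs `1` (added to
the pending cost) and appends to the end; dequeue costs the pending cost and
removes the head. -/
def QUEUEaux : ℕ × List E → Queue E :=
  PFunctor.M.corec fun s =>
    match s with
    | (c, []) =>
      ⟨(c, c, none), fun o =>
        match o with
        | some e => (c + 1, [e])
        | none => (0, [])⟩
    | (c, e :: l) =>
      ⟨(c, c, some e), fun o =>
        match o with
        | some e' => (c + 1, e :: (l ++ [e']))
        | none => (0, l)⟩

/-- The single-list specification queue: `quit` costs 0, `enqueue e` is
`step 1` of the queue on `l ++ [e]`, `dequeue` costs 0 and removes the head. -/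
def QUEUE (l : List E) : Queue E := QUEUEaux (0, l)

/-- The batched queue on state `(bl, fl)`: `quit` pays the potential
`length bl`; `enqueue` conses onto `bl` for free; `dequeue` pops the head of
`fl` for free, or, if `fl` is empty, reverses `bl` at cost `length bl`. -/
def batchedQueue : List E × List E → Queue E :=
  PFunctor.M.corec fun s =>
    match s with
    | (bl, e :: fl) =>
      ⟨(bl.length, 0, some e), fun o =>
        match o with
        | some e' => (e' :: bl, e :: fl)
        | none => (bl, fl)⟩
    | (bl, []) =>
      match bl.reverse with
      | [] =>
        ⟨(bl.length, 0, none), fun o =>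
          match o with
          | some e' => (e' :: bl, [])
          | none => ([], [])⟩
      | e :: fl' =>
        ⟨(bl.length, bl.length, some e), fun o =>
          match o with
          | some e' => (e' :: bl, [])
          | none => ([], fl')⟩

end Queue

/-- Finite queue programs: return, enqueue an element and continue, or dequeue
and continue with a cost and program depending on the dequeued element. -/
inductive Program (E : Type) : Type
  | ret : Program E
  | enq : E → Program E → Program E
  | deq : (Option E → ℕ) → (Option E → Program E) → Program E

namespace Queue

/-- Evaluation of a program on a queue, summing all incurred costs including
the final `quit` cost. -/
def psi {E : Type} : Program E → Queue E → ℕ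
  | .ret, q => quit q
  | .enq e p, q => psi p (enqueue q e)
  | .deq c f, q =>
    deqCost q + c (deqElem q) + psi (f (deqElem q)) (deqNext q)

end Queue

/-!
`step c` adds `c` to exactly one cost observed on any run — the final `quit` cost or the cost
of the first dequeue — so `psi p (step c q) = c + psi p q`. Hence a dequeue's cost may be moved
onto the successor queue: `psi` of a dequeue is the element's cost plus `psi` of the
continuation on `step (deqCost q) (deqNext q)`. This is precisely the pair that an amortized
bisimulation relates, so `psi p` is constant on related queues by induction on `p`.
-/

namespace Queue

variable {E : Type}

theorem dest_step (c : ℕ) (q : Queue E) :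
    PFunctor.M.dest (step c q) =
      ⟨(c + quit q, c + deqCost q, deqElem q),
       fun o => match o with
         | some e => step c (enqueue q e)
         | none => step 0 (deqNext q)⟩ := by
  rw [step]
  erw [PFunctor.M.dest_corec, PFunctor.map_eq]
  congr 1
  funext o
  cases o <;> rfl

@[simp]
theorem quit_step (c : ℕ) (q : Queue E) : quit (step c q) = c + quit q := by
  rw [quit, dest_step]

@[simp]
theorem deqCost_step (c : ℕ) (q : Queue E) : deqCost (step c q) = c + deqCost q := by
  rw [deqCost, dest_step]

@[simp]
theorem deqElem_step (c : ℕ) (q : Queue E) : deqElem (step c q) = deqElem q := by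
  rw [deqElem, dest_step]

@[simp]
theorem enqueue_step (c : ℕ) (q : Queue E) (e : E) :
    enqueue (step c q) e = step c (enqueue q e) := by
  rw [enqueue, dest_step]

@[simp]
theorem deqNext_step (c : ℕ) (q : Queue E) : deqNext (step c q) = step 0 (deqNext q) := by
  rw [deqNext, dest_step]

theorem psi_step (p : Program E) (c : ℕ) (q : Queue E) : psi p (step c q) = c + psi p q := by
  induction p generalizing c q with
  | ret => simp [psi]
  | enq e p ih => simp [psi, ih]
  | deq cost f ih =>
    simp only [psi, deqCost_step, deqElem_step, deqNext_step, ih]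
    omega

theorem psi_deq (cost : Option E → ℕ) (f : Option E → Program E) (q : Queue E) :
    psi (.deq cost f) q =
      cost (deqElem q) + psi (f (deqElem q)) (step (deqCost q) (deqNext q)) := by
  rw [psi, psi_step]
  omega

theorem IsAmortizedBisim.psi_eq {R : Queue E → Queue E → Prop} (hR : IsAmortizedBisim R)
    (p : Program E) {q₁ q₂ : Queue E} (hq : R q₁ q₂) : psi p q₁ = psi p q₂ := by
  induction p generalizing q₁ q₂ with
  | ret => exact (hR _ _ hq).1
  | enq e p ih => exact ih ((hR _ _ hq).2.1 e)
  | deq cost f ih =>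
    obtain ⟨-, -, helem, hnext⟩ := hR _ _ hq
    rw [psi_deq, psi_deq, helem, ih _ hnext]

end Queue

theorem amortEquiv_sound {E : Type} (q₁ q₂ : Queue E)
    (h : Queue.AmortEquiv q₁ q₂) (p : Program E) :
    Queue.psi p q₁ = Queue.psi p q₂ := by
  obtain ⟨R, hR, hq⟩ := h
  exact hR.psi_eq p hq
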